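/- For one step after the encoding: F̃(τ̃(α))(2x) = p_C(φ̂(α(x))) + p_R(φ̌(α(x−1))) and F̃(τ̃(α))(2x+1) = p_C(φ̌(α(x))) + p_R(φ̂(α(x))); consequently, after this step, (F̃(τ̃(α))(2x), F̃(τ̃(α))(2x+1)) ∈ B_C and (F̃(τ̃(α))(2x−1), F̃(τ̃(α))(2x)) ∈ B_R for all x ∈ ℤ. -/

import Mathlib

/-!
In `τ̃(α)` every odd cell holds a state `φ̌(q)`, whose light part lies in `Ř` and whose heavy
part lies in `Č`; such a state is never the left member of a pair in `B_R` or `B_C`. Hence at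
every cell of `τ̃(α)` the first two cases of `f̃` fail, and `F̃` merely recombines the heavy part
of a cell with the light part of its left neighbour. Since `φ̌_C = 2(2s_C−1)s_R − φ̂_C` and
`φ̌_R = 2s_R−1 − φ̂_R`, the recombined neighbours are again balanced.
-/

open scoped Classical

noncomputable section

/-- Heavy-particle part of a state: `p_C(q) = 2·sR·(q / (2·sR))`. -/
def pC (sR q : ℕ) : ℕ := 2 * sR * (q / (2 * sR))

/-- Light-particle part of a state: `p_R(q) = q mod (2·sR)`. -/
def pR (sR q : ℕ) : ℕ := q % (2 * sR)

/-- All heavy particles `C̃ = {2k·sR : 0 ≤ k ≤ 2sC−1}`. -/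
def Ctil (sC sR : ℕ) : Set ℕ := {c | ∃ k < 2 * sC, c = 2 * k * sR}

/-- All light particles `R̃ = {0,…,2sR−1}`. -/
def Rtil (sR : ℕ) : Set ℕ := {r | r < 2 * sR}

/-- `Ĉ = {2k·sR : 0 ≤ k ≤ sC−1}`. -/
def Chat (sC sR : ℕ) : Set ℕ := {c | ∃ k < sC, c = 2 * k * sR}

/-- `Č = {2(k+sC)·sR : 0 ≤ k ≤ sC−1}`. -/
def Ccheck (sC sR : ℕ) : Set ℕ := {c | ∃ k < sC, c = 2 * (k + sC) * sR}

/-- `R̂ = {0,…,sR−1}`. -/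
def Rhat (sR : ℕ) : Set ℕ := {r | r < sR}

/-- `Ř = {sR,…,2sR−1}`. -/
def Rcheck (sR : ℕ) : Set ℕ := {r | sR ≤ r ∧ r < 2 * sR}

/-- Balanced pair of states w.r.t. heavy particles. -/
def BC (sC sR q1 q2 : ℕ) : Prop :=
  pC sR q1 ∈ Chat sC sR ∧ pC sR q2 ∈ Ccheck sC sR ∧
    pC sR q1 + pC sR q2 = 2 * (2 * sC - 1) * sR

/-- Balanced pair of states w.r.t. light particles. -/
def BR (sR q1 q2 : ℕ) : Prop :=
  pR sR q1 ∈ Rhat sR ∧ pR sR q2 ∈ Rcheck sR ∧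
    pR sR q1 + pR sR q2 = 2 * sR - 1

/-- `φ̂_C : C → Ĉ` built from an arbitrary bijection `φC` of `C = Fin sC`. -/
def phatC (sC sR : ℕ) (φC : Fin sC ≃ Fin sC) (c : Fin sC) : ℕ := 2 * (φC c : ℕ) * sR

/-- `φ̂_R : R → R̂` built from an arbitrary bijection `φR` of `R = Fin sR`. -/
def phatR (sR : ℕ) (φR : Fin sR ≃ Fin sR) (r : Fin sR) : ℕ := (φR r : ℕ)

/-- `φ̌_C(c) = 2(2sC−1)sR − φ̂_C(c)`. -/
def pcheckC (sC sR : ℕ) (φC : Fin sC ≃ Fin sC) (c : Fin sC) : ℕ :=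
  2 * (2 * sC - 1) * sR - phatC sC sR φC c

/-- `φ̌_R(r) = 2sR−1 − φ̂_R(r)`. -/
def pcheckR (sR : ℕ) (φR : Fin sR ≃ Fin sR) (r : Fin sR) : ℕ :=
  2 * sR - 1 - phatR sR φR r

/-- `φ̂(c,r) = φ̂_C(c) + φ̂_R(r)`. -/
def phat (sC sR : ℕ) (φC : Fin sC ≃ Fin sC) (φR : Fin sR ≃ Fin sR)
    (q : Fin sC × Fin sR) : ℕ := phatC sC sR φC q.1 + phatR sR φR q.2

/-- `φ̌(c,r) = φ̌_C(c) + φ̌_R(r)`. -/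
def pcheck (sC sR : ℕ) (φC : Fin sC ≃ Fin sC) (φR : Fin sR ≃ Fin sR)
    (q : Fin sC × Fin sR) : ℕ := pcheckC sC sR φC q.1 + pcheckR sR φR q.2

/-- `Q̂ = {ĉ + r̂ : ĉ ∈ Ĉ, r̂ ∈ R̂}`. -/
def Qhat (sC sR : ℕ) : Set ℕ := {q | ∃ c ∈ Chat sC sR, ∃ r ∈ Rhat sR, q = c + r}

/-- `Q̌ = {č + ř : č ∈ Č, ř ∈ Ř}`. -/
def Qcheck (sC sR : ℕ) : Set ℕ := {q | ∃ c ∈ Ccheck sC sR, ∃ r ∈ Rcheck sR, q = c + r}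

/-- `φ̂_C⁻¹` applied to a heavy particle (given as a natural number). -/
def decC (sC sR : ℕ) [NeZero sC] (φC : Fin sC ≃ Fin sC) (c : ℕ) : Fin sC :=
  φC.symm ⟨(c / (2 * sR)) % sC, Nat.mod_lt _ (Nat.pos_of_ne_zero (NeZero.ne sC))⟩

/-- `φ̂_R⁻¹` applied to a light particle (given as a natural number). -/
def decR (sR : ℕ) [NeZero sR] (φR : Fin sR ≃ Fin sR) (r : ℕ) : Fin sR :=
  φR.symm ⟨r % sR, Nat.mod_lt _ (Nat.pos_of_ne_zero (NeZero.ne sR))⟩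

/-- The three-case local function `f̃` of the 4-neighbor RNCCA `A`. -/
def ftil (sC sR : ℕ) [NeZero sC] [NeZero sR] (φC : Fin sC ≃ Fin sC) (φR : Fin sR ≃ Fin sR)
    (f : Fin sC × Fin sR → Fin sC × Fin sR) (qm2 qm1 q0 q1 : ℕ) : ℕ :=
  if BR sR qm1 q0 ∧ BC sC sR q0 q1 then
    phat sC sR φC φR (f (decC sC sR φC (pC sR q0), decR sR φR (pR sR qm1)))
  else if BR sR qm2 qm1 ∧ BC sC sR qm1 q0 then
    pcheck sC sR φC φR (f (decC sC sR φC (pC sR qm1), decR sR φR (pR sR qm2)))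
  else pC sR q0 + pR sR qm1

/-- Global function `F̃` of `A` with neighborhood `(−2,−1,0,1)`. -/
def Ftil (sC sR : ℕ) [NeZero sC] [NeZero sR] (φC : Fin sC ≃ Fin sC) (φR : Fin sR ≃ Fin sR)
    (f : Fin sC × Fin sR → Fin sC × Fin sR) (α : ℤ → ℕ) (x : ℤ) : ℕ :=
  ftil sC sR φC φR f (α (x - 2)) (α (x - 1)) (α x) (α (x + 1))

/-- The encoding `τ̃`: `τ̃(α)(2x) = φ̂(α(x))`, `τ̃(α)(2x+1) = φ̌(α(x))`. -/
def tenc (sC sR : ℕ) (φC : Fin sC ≃ Fin sC) (φR : Fin sR ≃ Fin sR)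
    (α : ℤ → Fin sC × Fin sR) (y : ℤ) : ℕ :=
  if Even y then phat sC sR φC φR (α (y / 2)) else pcheck sC sR φC φR (α ((y - 1) / 2))

/-- Global function of the 2-neighbor PCA `P` with neighborhood `(0,−1)`. -/
def FP {C R : Type*} (f : C × R → C × R) (α : ℤ → C × R) (x : ℤ) : C × R :=
  f ((α x).1, (α (x - 1)).2)

end

section Encoding

variable {sC sR : ℕ}

lemma pC_mul_add {m a : ℕ} (ha : a < 2 * sR) : pC sR (2 * sR * m + a) = 2 * sR * m := by
  rw [pC, Nat.mul_add_div (by omega), Nat.div_eq_of_lt ha, Nat.add_zero]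

lemma pR_mul_add {m a : ℕ} (ha : a < 2 * sR) : pR sR (2 * sR * m + a) = a := by
  rw [pR, Nat.mul_add_mod, Nat.mod_eq_of_lt ha]

lemma BC_mul_add {c a b : ℕ} (hc : c < sC) (ha : a < 2 * sR) (hb : b < 2 * sR) :
    BC sC sR (2 * sR * c + a) (2 * sR * (2 * sC - 1 - c) + b) := by
  rw [BC, pC_mul_add ha, pC_mul_add hb, ← Nat.mul_add,
    show c + (2 * sC - 1 - c) = 2 * sC - 1 by omega]
  refine ⟨⟨c, hc, by ring⟩, ⟨sC - 1 - c, by omega, ?_⟩, by ring⟩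
  rw [show sC - 1 - c + sC = 2 * sC - 1 - c by omega]
  ring

lemma BR_mul_add {r : ℕ} (m n : ℕ) (hr : r < sR) :
    BR sR (2 * sR * m + r) (2 * sR * n + (2 * sR - 1 - r)) := by
  rw [BR, pR_mul_add (by omega), pR_mul_add (by omega)]
  exact ⟨hr, show sR ≤ _ ∧ _ < _ by omega, by omega⟩

variable (φC : Fin sC ≃ Fin sC) (φR : Fin sR ≃ Fin sR)

lemma phat_eq (q : Fin sC × Fin sR) :
    phat sC sR φC φR q = 2 * sR * (φC q.1 : ℕ) + φR q.2 := by
  rw [phat, phatC, phatR]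
  ring

lemma pcheck_eq (q : Fin sC × Fin sR) :
    pcheck sC sR φC φR q = 2 * sR * (2 * sC - 1 - φC q.1) + (2 * sR - 1 - φR q.2) := by
  rw [pcheck, pcheckC, pcheckR, phatC, phatR, ← Nat.sub_mul, ← Nat.mul_sub, mul_right_comm]

lemma pC_phat (q : Fin sC × Fin sR) : pC sR (phat sC sR φC φR q) = 2 * sR * (φC q.1 : ℕ) := by
  rw [phat_eq, pC_mul_add (by omega)]

lemma pR_phat (q : Fin sC × Fin sR) : pR sR (phat sC sR φC φR q) = φR q.2 := by
  rw [phat_eq, pR_mul_add (by omega)]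

lemma pC_pcheck (q : Fin sC × Fin sR) :
    pC sR (pcheck sC sR φC φR q) = 2 * sR * (2 * sC - 1 - φC q.1) := by
  rw [pcheck_eq, pC_mul_add (by omega)]

lemma pR_pcheck (q : Fin sC × Fin sR) : pR sR (pcheck sC sR φC φR q) = 2 * sR - 1 - φR q.2 := by
  rw [pcheck_eq, pR_mul_add (by omega)]

lemma not_BR_pcheck (q : Fin sC × Fin sR) (b : ℕ) : ¬ BR sR (pcheck sC sR φC φR q) b := by
  rintro ⟨hlight, -, -⟩
  have : 2 * sR - 1 - φR q.2 < sR := pR_pcheck φC φR q ▸ hlight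
  omega

lemma not_BC_pcheck (q : Fin sC × Fin sR) (b : ℕ) : ¬ BC sC sR (pcheck sC sR φC φR q) b := by
  rintro ⟨⟨k, hk, hheavy⟩, -, -⟩
  rw [pC_pcheck, show 2 * k * sR = 2 * sR * k by ring] at hheavy
  have := Nat.eq_of_mul_eq_mul_left (by linarith [q.2.pos]) hheavy
  have := (φC q.1).isLt
  omega

lemma tenc_two_mul (α : ℤ → Fin sC × Fin sR) (x : ℤ) :
    tenc sC sR φC φR α (2 * x) = phat sC sR φC φR (α x) := by
  rw [tenc, if_pos (even_two_mul x), Int.mul_ediv_cancel_left x two_ne_zero]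

lemma tenc_two_mul_add_one (α : ℤ → Fin sC × Fin sR) (x : ℤ) :
    tenc sC sR φC φR α (2 * x + 1) = pcheck sC sR φC φR (α x) := by
  rw [tenc, if_neg (Int.not_even_two_mul_add_one x), add_sub_cancel_right,
    Int.mul_ediv_cancel_left x two_ne_zero]

variable [NeZero sC] [NeZero sR] (f : Fin sC × Fin sR → Fin sC × Fin sR)
  (α : ℤ → Fin sC × Fin sR) (x : ℤ)

lemma Ftil_tenc_two_mul :
    Ftil sC sR φC φR f (tenc sC sR φC φR α) (2 * x) =
      pC sR (phat sC sR φC φR (α x)) + pR sR (pcheck sC sR φC φR (α (x - 1))) := by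
  rw [Ftil, show 2 * x - 2 = 2 * (x - 1) by ring, show 2 * x - 1 = 2 * (x - 1) + 1 by ring,
    tenc_two_mul, tenc_two_mul, tenc_two_mul_add_one, ftil,
    if_neg fun h => not_BR_pcheck φC φR _ _ h.1, if_neg fun h => not_BC_pcheck φC φR _ _ h.2]

lemma Ftil_tenc_two_mul_add_one :
    Ftil sC sR φC φR f (tenc sC sR φC φR α) (2 * x + 1) =
      pC sR (pcheck sC sR φC φR (α x)) + pR sR (phat sC sR φC φR (α x)) := by
  rw [Ftil, show 2 * x + 1 - 2 = 2 * (x - 1) + 1 by ring, add_sub_cancel_right,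
    show 2 * x + 1 + 1 = 2 * (x + 1) by ring, tenc_two_mul, tenc_two_mul_add_one,
    tenc_two_mul_add_one, ftil,
    if_neg fun h => not_BC_pcheck φC φR _ _ h.2, if_neg fun h => not_BR_pcheck φC φR _ _ h.1]

end Encoding

theorem stmt14_general (sC sR : ℕ) [NeZero sC] [NeZero sR] (φC : Fin sC ≃ Fin sC)
    (φR : Fin sR ≃ Fin sR) (f : Fin sC × Fin sR → Fin sC × Fin sR)
    (α : ℤ → Fin sC × Fin sR) (x : ℤ) :
    Ftil sC sR φC φR f (tenc sC sR φC φR α) (2 * x) =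
      pC sR (phat sC sR φC φR (α x)) + pR sR (pcheck sC sR φC φR (α (x - 1))) ∧
    Ftil sC sR φC φR f (tenc sC sR φC φR α) (2 * x + 1) =
      pC sR (pcheck sC sR φC φR (α x)) + pR sR (phat sC sR φC φR (α x)) ∧
    BC sC sR (Ftil sC sR φC φR f (tenc sC sR φC φR α) (2 * x))
      (Ftil sC sR φC φR f (tenc sC sR φC φR α) (2 * x + 1)) ∧
    BR sR (Ftil sC sR φC φR f (tenc sC sR φC φR α) (2 * x - 1))
      (Ftil sC sR φC φR f (tenc sC sR φC φR α) (2 * x)) := by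
  have hcur := Ftil_tenc_two_mul φC φR f α x
  have hnext := Ftil_tenc_two_mul_add_one φC φR f α x
  have hprev := Ftil_tenc_two_mul_add_one φC φR f α (x - 1)
  rw [show 2 * (x - 1) + 1 = 2 * x - 1 by ring] at hprev
  refine ⟨hcur, hnext, ?_, ?_⟩
  · rw [hcur, hnext, pC_phat, pR_pcheck, pC_pcheck, pR_phat]
    exact BC_mul_add (φC (α x).1).isLt (by omega) (by omega)
  · rw [hprev, hcur, pC_phat, pR_pcheck, pC_pcheck, pR_phat]
    exact BR_mul_add _ _ (φR (α (x - 1)).2).isLt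

theorem stmt14 (sC sR : ℕ) [NeZero sC] [NeZero sR] (φC : Fin sC ≃ Fin sC)
    (φR : Fin sR ≃ Fin sR) (f : Fin sC × Fin sR → Fin sC × Fin sR)
    (hf : Function.Injective f) (α : ℤ → Fin sC × Fin sR) (x : ℤ) :
    Ftil sC sR φC φR f (tenc sC sR φC φR α) (2 * x) =
      pC sR (phat sC sR φC φR (α x)) + pR sR (pcheck sC sR φC φR (α (x - 1))) ∧
    Ftil sC sR φC φR f (tenc sC sR φC φR α) (2 * x + 1) =
      pC sR (pcheck sC sR φC φR (α x)) + pR sR (phat sC sR φC φR (α x)) ∧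
    BC sC sR (Ftil sC sR φC φR f (tenc sC sR φC φR α) (2 * x))
      (Ftil sC sR φC φR f (tenc sC sR φC φR α) (2 * x + 1)) ∧
    BR sR (Ftil sC sR φC φR f (tenc sC sR φC φR α) (2 * x - 1))
      (Ftil sC sR φC φR f (tenc sC sR φC φR α) (2 * x)) :=
  stmt14_general sC sR φC φR f α x
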